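/- arXiv:2201.00410 — 3 statements merged into one kernel-verified Lean document; each statement's English description precedes it below -/
import Mathlib

section
/- Fix an even integer κ ≥ 4 and an even integer n ≥ 2. The system of equations in the real unknowns E, X₀, …, X_{n+1} given by T_κ(X_q) = T_κ(X_{n−q}) for q = 0, 1, …, n/2 − 1 and X_{1+q}·X_{n−q} = E for q = −1, 0, …, n/2 − 1 admits a unique solution satisfying cos²(π/κ) < E < cos(π/κ) and the chain of inequalities E = X₀ < X₁ < ⋯ < X_{n/2} = cos(π/κ) < X_{n/2+1} < ⋯ < X_n < X_{n+1} = 1. Moreover, for this solution, X_q ∈ (−1,1)∖{0} and U_{κ−1}(X_q) ≠ 0 for q = 0, 1, …, n/2 − 1, and for each such q one has X_q·X_{n−q} > 0 and U_{κ−1}(X_q)·U_{κ−1}(X_{n−q}) < 0; consequently E ∈ 𝚯_{n/2,κ} (dimension 2). -/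
open Real

/-- Chebyshev polynomial of the first kind, as a real function. -/
noncomputable def chebT (n : ℕ) (x : ℝ) : ℝ := (Polynomial.Chebyshev.T ℝ n).eval x

/-- Chebyshev polynomial of the second kind, as a real function. -/
noncomputable def chebU (n : ℕ) (x : ℝ) : ℝ := (Polynomial.Chebyshev.U ℝ n).eval x

/-- The function `g_{jκ}^E(x) = (E/x)(1-x²)U_{jκ-1}(x) + x(1-(E/x)²)U_{jκ-1}(E/x)`. -/
noncomputable def g (j κ : ℕ) (E x : ℝ) : ℝ :=
  (E / x) * (1 - x ^ 2) * chebU (j * κ - 1) x + x * (1 - (E / x) ^ 2) * chebU (j * κ - 1) (E / x)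

/-- `E ∈ 𝚯_{m,κ}` (dimension 2). -/
def Theta2 (m κ : ℕ) (E : ℝ) : Prop :=
  ∃ x : ℕ → ℝ, ∃ ω : ℕ → ℝ,
    (∀ q ≤ m, x q ≠ 0 ∧ |x q| ≤ 1 ∧ |E / x q| ≤ 1) ∧
    (∀ q < m, ω q ≤ 0) ∧
    (∀ j : ℕ, 1 ≤ j → g j κ E (x m) = ∑ q ∈ Finset.range m, ω q * g j κ E (x q))

/-- The even system, together with `cos²(π/κ) < E < cos(π/κ)` and the chain
`E = X₀ < X₁ < ⋯ < X_{n/2} = cos(π/κ) < X_{n/2+1} < ⋯ < X_n < X_{n+1} = 1`. -/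
def SolEven (κ n : ℕ) (E : ℝ) (X : ℕ → ℝ) : Prop :=
  (∀ q ≤ n / 2 - 1, chebT κ (X q) = chebT κ (X (n - q))) ∧
  (∀ q ≤ n / 2, X q * X (n + 1 - q) = E) ∧
  (Real.cos (π / κ) ^ 2 < E ∧ E < Real.cos (π / κ)) ∧
  X 0 = E ∧ X (n + 1) = 1 ∧ X (n / 2) = Real.cos (π / κ) ∧
  (∀ q < n + 1, X q < X (q + 1))

lemma chebU_cos (k : ℕ) (hk : 1 ≤ k) (θ : ℝ) :
    chebU (k - 1) (cos θ) * sin θ = sin (k * θ) := by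
  unfold chebU
  rw [Polynomial.Chebyshev.U_real_cos]
  congr 1
  push_cast [Nat.cast_sub hk]
  ring

open Real

lemma arccos_antitone : Antitone arccos := fun x y h => by
  simp only [arccos]; linarith [Real.monotone_arcsin h]

lemma arccos_lt_of_cos_lt {x y : ℝ} (hy0 : 0 < y) (hyp : y ≤ π) (h : cos y < x) :
    arccos x < y := by
  rcases le_or_gt x 1 with hx | hx
  · have := Real.strictAntiOn_arccos
      (Set.mem_Icc.2 ⟨Real.neg_one_le_cos y, (h.le.trans hx)⟩)
      (Set.mem_Icc.2 ⟨(Real.neg_one_le_cos y).trans h.le, hx⟩) h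
    rwa [Real.arccos_cos hy0.le hyp] at this
  · have : arccos x = 0 := Real.arccos_eq_zero.2 hx.le
    simpa [this] using hy0

lemma lt_arccos_of_lt_cos {x y : ℝ} (hy0 : 0 ≤ y) (hyp : y ≤ π) (h1 : -1 ≤ x) (h : x < cos y) :
    y < arccos x := by
  have := Real.strictAntiOn_arccos
    (Set.mem_Icc.2 ⟨h1, h.le.trans (Real.cos_le_one y)⟩)
    (Set.mem_Icc.2 ⟨Real.neg_one_le_cos y, Real.cos_le_one y⟩) h
  rwa [Real.arccos_cos hy0 hyp] at this

noncomputable def prj (t α : ℝ) : ℝ := min (max α t) (2 * t)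

noncomputable def FF (t E α : ℝ) : ℝ := arccos (E / cos (2 * t - prj t α))

noncomputable def orb (t E : ℝ) : ℕ → ℝ
  | 0 => arccos E
  | q + 1 => FF t E (orb t E q)

section
variable {t : ℝ}

lemma prj_ge (ht : 0 < t) (α : ℝ) : t ≤ prj t α :=
  le_min (le_max_right _ _) (by linarith)

lemma prj_le (ht : 0 < t) (α : ℝ) : prj t α ≤ 2 * t := min_le_right _ _

lemma prj_mono : Monotone (prj t) := fun a b h =>
  min_le_min (max_le_max h le_rfl) le_rfl

lemma prj_eq {α : ℝ} (h1 : t ≤ α) (h2 : α ≤ 2 * t) : prj t α = α := by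
  rw [prj, max_eq_left h1, min_eq_left h2]

variable (ht : 0 < t) (ht4 : t ≤ π / 4)
include ht ht4

lemma tlepi : 2 * t ≤ π / 2 := by linarith

lemma ct_pos : 0 < cos t :=
  Real.cos_pos_of_mem_Ioo ⟨by linarith [pi_pos], by linarith [pi_pos]⟩

lemma ct_lt_one : cos t < 1 := by
  have := Real.cos_lt_cos_of_nonneg_of_le_pi le_rfl (by linarith [pi_pos]) ht
  simpa using this

lemma c2t_lt_sq : cos (2 * t) < cos t ^ 2 := by
  have h1 : cos t ^ 2 < 1 := by nlinarith [ct_pos ht ht4, ct_lt_one ht ht4]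
  have := Real.cos_two_mul t
  nlinarith

lemma sq_lt_c : cos t ^ 2 < cos t := by
  nlinarith [ct_pos ht ht4, ct_lt_one ht ht4]

lemma c2t_nonneg : 0 ≤ cos (2 * t) :=
  Real.cos_nonneg_of_mem_Icc ⟨by linarith [pi_pos], by linarith⟩

lemma den_angle_mem (α : ℝ) : 0 ≤ 2 * t - prj t α ∧ 2 * t - prj t α ≤ t :=
  ⟨by linarith [prj_le ht α], by linarith [prj_ge ht α]⟩

lemma den_ge (α : ℝ) : cos t ≤ cos (2 * t - prj t α) := by
  obtain ⟨h0, h1⟩ := den_angle_mem ht ht4 α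
  exact Real.cos_le_cos_of_nonneg_of_le_pi h0 (by linarith [pi_pos]) h1

lemma den_pos (α : ℝ) : 0 < cos (2 * t - prj t α) :=
  lt_of_lt_of_le (ct_pos ht ht4) (den_ge ht ht4 α)

end
section
variable {t : ℝ}
variable (ht : 0 < t) (ht4 : t ≤ π / 4)
include ht ht4

lemma quot_mem {E : ℝ} (hE1 : cos t ^ 2 ≤ E) (hE2 : E ≤ cos t) (α : ℝ) :
    cos t ^ 2 ≤ E / cos (2 * t - prj t α) ∧ E / cos (2 * t - prj t α) ≤ 1 := by
  have hd := den_pos ht ht4 α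
  have hd1 : cos (2 * t - prj t α) ≤ 1 := Real.cos_le_one _
  have hdg := den_ge ht ht4 α
  refine ⟨?_, ?_⟩
  · calc cos t ^ 2 ≤ E := hE1
    _ ≤ E / cos (2 * t - prj t α) := by
        rw [le_div_iff₀ hd]; nlinarith [le_trans (sq_nonneg (cos t)) hE1]
  · rw [div_le_one hd]; linarith

lemma FF_lt_2t {E : ℝ} (hE1 : cos t ^ 2 ≤ E) (hE2 : E ≤ cos t) (α : ℝ) :
    FF t E α < 2 * t := by
  obtain ⟨hq1, _⟩ := quot_mem ht ht4 hE1 hE2 α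
  exact arccos_lt_of_cos_lt (by linarith) (by linarith [pi_pos])
    (lt_of_lt_of_le (c2t_lt_sq ht ht4) hq1)

lemma FF_mono {E : ℝ} (hE0 : 0 ≤ E) {α α' : ℝ} (h : α ≤ α') : FF t E α ≤ FF t E α' := by
  have h2 : cos (2 * t - prj t α) ≤ cos (2 * t - prj t α') := by
    obtain ⟨h0, hle⟩ := den_angle_mem ht ht4 α'
    exact Real.cos_le_cos_of_nonneg_of_le_pi h0 (by linarith [prj_ge ht α, pi_pos])
      (by linarith [prj_mono (t := t) h])
  exact arccos_antitone (div_le_div_of_nonneg_left hE0 (den_pos ht ht4 α) h2)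

lemma FF_strict_E {E E' : ℝ} (hE1 : cos t ^ 2 ≤ E) (hE2' : E' ≤ cos t) (h : E < E') (α : ℝ) :
    FF t E' α < FF t E α := by
  have hd := den_pos ht ht4 α
  have hlt : E / cos (2 * t - prj t α) < E' / cos (2 * t - prj t α) :=
    (div_lt_div_iff_of_pos_right hd).2 h
  obtain ⟨hq1, _⟩ := quot_mem ht ht4 hE1 (by linarith : E ≤ cos t) α
  obtain ⟨_, hq2⟩ := quot_mem ht ht4 (by linarith : cos t ^ 2 ≤ E') hE2' α
  exact Real.strictAntiOn_arccos
    (Set.mem_Icc.2 ⟨by nlinarith [sq_nonneg (cos t)], by linarith⟩)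
    (Set.mem_Icc.2 ⟨by nlinarith [sq_nonneg (cos t)], hq2⟩) hlt

lemma FF_cos {E : ℝ} (hE1 : cos t ^ 2 ≤ E) (hE2 : E ≤ cos t) (α : ℝ) :
    cos (FF t E α) = E / cos (2 * t - prj t α) := by
  obtain ⟨hq1, hq2⟩ := quot_mem ht ht4 hE1 hE2 α
  exact Real.cos_arccos (by nlinarith [sq_nonneg (cos t)]) hq2

lemma FF_lt_self {E α : ℝ} (hE1 : cos t ^ 2 < E) (hE2 : E ≤ cos t)
    (h1 : t ≤ α) (h2 : α ≤ 2 * t) : FF t E α < α := by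
  have hpr : prj t α = α := prj_eq h1 h2
  have hd := den_pos ht ht4 α
  have hda : cos α * cos (2 * t - α) ≤ cos t ^ 2 := by
    have hsum : cos α * cos (2 * t - α) = (cos (2*t) + cos (2*α - 2*t)) / 2 := by
      have e1 := Real.cos_add α (2 * t - α)
      have e2 := Real.cos_sub α (2 * t - α)
      have : α + (2*t - α) = 2*t := by ring
      rw [this] at e1
      have : α - (2*t - α) = 2*α - 2*t := by ring
      rw [this] at e2
      linarith
    have hb : cos (2*α - 2*t) ≤ 1 := Real.cos_le_one _
    have hcsq : cos t ^ 2 = (1 + cos (2*t)) / 2 := by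
      have := Real.cos_two_mul t; linarith
    linarith [hsum, hb, hcsq]
  rw [FF, hpr]
  have hgt : cos α < E / cos (2 * t - α) := by
    rw [lt_div_iff₀ (by rwa [hpr] at hd)]
    have : cos α * cos (2*t - α) < E := lt_of_le_of_lt hda hE1
    linarith
  exact arccos_lt_of_cos_lt (by linarith) (by linarith [pi_pos]) hgt

lemma FF_gt_t_at_sq {α : ℝ} (h1 : t < α) (h2 : α ≤ 2 * t) : t < FF t (cos t ^ 2) α := by
  have hpr : prj t α = α := prj_eq h1.le h2
  have hdlt : cos t < cos (2 * t - α) := by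
    apply Real.cos_lt_cos_of_nonneg_of_le_pi (by linarith) (by linarith [pi_pos]) (by linarith)
  have hd : 0 < cos (2 * t - α) := lt_trans (ct_pos ht ht4) hdlt
  rw [FF, hpr]
  apply lt_arccos_of_lt_cos ht.le (by linarith [pi_pos])
  · have : (0:ℝ) ≤ cos t ^ 2 / cos (2 * t - α) := by positivity
    linarith
  · rw [div_lt_iff₀ hd]; nlinarith [ct_pos ht ht4]

lemma FF_low {E α : ℝ} (hE1 : cos t ^ 2 < E) (h0 : 0 ≤ α) (h2 : α ≤ t) : FF t E α < t := by
  have hpr : prj t α = t := by rw [prj, max_eq_right h2, min_eq_left (by linarith)]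
  rw [FF, hpr]
  have : 2 * t - t = t := by ring
  rw [this]
  apply arccos_lt_of_cos_lt ht (by linarith [pi_pos])
  rw [lt_div_iff₀ (ct_pos ht ht4)]; nlinarith

lemma orb_cont (q : ℕ) : Continuous (fun E => orb t E q) := by
  induction q with
  | zero => exact Real.continuous_arccos
  | succ q ih =>
    show Continuous (fun E => FF t E (orb t E q))
    unfold FF
    apply Real.continuous_arccos.comp
    apply Continuous.div continuous_id
    · apply Real.continuous_cos.comp
      apply Continuous.sub continuous_const
      unfold prj
      exact Continuous.min (Continuous.max ih continuous_const) continuous_const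
    · intro E; exact ne_of_gt (den_pos ht ht4 _)

lemma orb_nonneg (E : ℝ) (q : ℕ) : 0 ≤ orb t E q := by
  cases q with
  | zero => exact Real.arccos_nonneg _
  | succ q => exact Real.arccos_nonneg _

lemma orb_lt_2t {E : ℝ} (hE1 : cos t ^ 2 ≤ E) (hE2 : E ≤ cos t) (q : ℕ) :
    orb t E q < 2 * t := by
  cases q with
  | zero =>
    exact arccos_lt_of_cos_lt (by linarith) (by linarith [pi_pos])
      (lt_of_lt_of_le (c2t_lt_sq ht ht4) hE1)
  | succ q => exact FF_lt_2t ht ht4 hE1 hE2 _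

lemma orb_anti {E E' : ℝ} (hE1 : cos t ^ 2 ≤ E) (hE2' : E' ≤ cos t) (h : E < E') (q : ℕ) :
    orb t E' q < orb t E q := by
  induction q with
  | zero =>
    exact Real.strictAntiOn_arccos
      (Set.mem_Icc.2 ⟨by nlinarith [sq_nonneg (cos t)], by linarith [ct_lt_one ht ht4]⟩)
      (Set.mem_Icc.2 ⟨by nlinarith [sq_nonneg (cos t)], by linarith [ct_lt_one ht ht4]⟩) h
  | succ q ih =>
    calc orb t E' (q+1) = FF t E' (orb t E' q) := rfl
    _ ≤ FF t E' (orb t E q) := FF_mono ht ht4 (by nlinarith [sq_nonneg (cos t)]) ih.le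
    _ < FF t E (orb t E q) := FF_strict_E ht ht4 hE1 hE2' h _
    _ = orb t E (q+1) := rfl

lemma orb_sq_gt_t (q : ℕ) : t < orb t (cos t ^ 2) q := by
  induction q with
  | zero =>
    apply lt_arccos_of_lt_cos ht.le (by linarith [pi_pos])
    · nlinarith [sq_nonneg (cos t)]
    · exact sq_lt_c ht ht4
  | succ q ih =>
    have h2 := orb_lt_2t ht ht4 le_rfl (sq_lt_c ht ht4).le q
    exact FF_gt_t_at_sq ht ht4 ih h2.le

lemma orb_c_zero (q : ℕ) : orb t (cos t) (q + 1) = 0 := by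
  have key : ∀ α, prj t α = t → FF t (cos t) α = 0 := by
    intro α hα
    rw [FF, hα]
    have : 2 * t - t = t := by ring
    rw [this, div_self (ne_of_gt (ct_pos ht ht4))]
    exact Real.arccos_eq_zero.2 le_rfl
  induction q with
  | zero =>
    show FF t (cos t) (orb t (cos t) 0) = 0
    apply key
    show prj t (arccos (cos t)) = t
    rw [Real.arccos_cos ht.le (by linarith [pi_pos])]
    rw [prj, max_self, min_eq_left (by linarith)]
  | succ q ih =>
    show FF t (cos t) (orb t (cos t) (q+1)) = 0
    apply key
    rw [ih, prj, max_eq_right ht.le, min_eq_left (by linarith)]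

lemma orb_low_step {E : ℝ} (hE1 : cos t ^ 2 < E) {q : ℕ} (h : orb t E q ≤ t) :
    orb t E (q + 1) < t :=
  FF_low ht ht4 hE1 (orb_nonneg ht ht4 E q) h

end
set_option maxHeartbeats 4000000 in
/-- Existence and uniqueness of the solution of the even system in
`J₂(κ) = (cos²(π/κ), cos(π/κ))`, together with the sign conditions, whence
`E ∈ 𝚯_{n/2,κ}` (dimension 2). -/
theorem exists_unique_solution_even (κ n : ℕ) (hκ : 4 ≤ κ) (hke : Even κ)
    (hn : 2 ≤ n) (hne : Even n) :
    ∃ E : ℝ, ∃ X : ℕ → ℝ,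
      SolEven κ n E X ∧
      (∀ E' : ℝ, ∀ X' : ℕ → ℝ, SolEven κ n E' X' →
        E' = E ∧ ∀ q ≤ n + 1, X' q = X q) ∧
      (∀ q ≤ n / 2 - 1,
        (-1 < X q ∧ X q < 1 ∧ X q ≠ 0) ∧ chebU (κ - 1) (X q) ≠ 0 ∧
        0 < X q * X (n - q) ∧
        chebU (κ - 1) (X q) * chebU (κ - 1) (X (n - q)) < 0) ∧
      Theta2 (n / 2) κ E := by
  have hκ0 : (0:ℝ) < κ := by positivity
  set t : ℝ := π / κ with htdef
  have ht : 0 < t := by positivity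
  have ht4 : t ≤ π / 4 := by
    rw [htdef]
    apply div_le_div_of_nonneg_left pi_pos.le (by norm_num)
    exact_mod_cast hκ
  have hkt : (κ:ℝ) * t = π := by rw [htdef]; field_simp
  have h2tpi : 2 * t ≤ π / 2 := by linarith
  have hpi : (0:ℝ) < π := pi_pos
  set m : ℕ := n / 2 with hmdef
  obtain ⟨r, hr⟩ := hne
  have hnm : n = 2 * m := by omega
  have hm1 : 1 ≤ m := by omega
  have hcpos : 0 < cos t := ct_pos ht ht4
  have hclt1 : cos t < 1 := ct_lt_one ht ht4
  have hsqlt : cos t ^ 2 < cos t := sq_lt_c ht ht4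
  have hc2t : cos (2 * t) < cos t ^ 2 := c2t_lt_sq ht ht4
  -- IVT to find E
  have hcont : ContinuousOn (fun E => orb t E m) (Set.Icc (cos t ^ 2) (cos t)) :=
    (orb_cont ht ht4 m).continuousOn
  have h0m : orb t (cos t) m = 0 := by
    rw [show m = (m - 1) + 1 by omega]; exact orb_c_zero ht ht4 (m - 1)
  have hivt := intermediate_value_Icc' hsqlt.le hcont
  have htmem : t ∈ Set.Icc (orb t (cos t) m) (orb t (cos t ^ 2) m) := by
    constructor
    · rw [h0m]; exact ht.le
    · exact (orb_sq_gt_t ht ht4 m).le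
  obtain ⟨E, hEmem, hEm⟩ := hivt htmem
  simp only at hEm
  have hE1 : cos t ^ 2 < E := by
    rcases eq_or_lt_of_le hEmem.1 with h | h
    · exfalso; rw [← h] at hEm; exact absurd hEm (ne_of_gt (orb_sq_gt_t ht ht4 m))
    · exact h
  have hE2 : E < cos t := by
    rcases eq_or_lt_of_le hEmem.2 with h | h
    · exfalso; rw [h] at hEm; rw [h0m] at hEm; linarith
    · exact h
  have hE0 : 0 < E := lt_trans (by positivity) hE1
  have hEle1 : E ≤ 1 := by linarith
  have hO2t : ∀ q, orb t E q < 2 * t := orb_lt_2t ht ht4 hE1.le hE2.le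
  have hOnn : ∀ q, 0 ≤ orb t E q := orb_nonneg ht ht4 E
  -- the orbit stays above t before step m
  have hchain : ∀ q < m, t < orb t E q := by
    by_contra hcon
    push_neg at hcon
    obtain ⟨q, hq, hle⟩ := hcon
    have hlow : ∀ k, q + 1 + k ≤ m → orb t E (q + 1 + k) < t := by
      intro k
      induction k with
      | zero => intro _; exact orb_low_step ht ht4 hE1 hle
      | succ k ih =>
        intro hk
        have h1 := ih (by omega)
        have := orb_low_step ht ht4 hE1 (le_of_lt h1)
        rw [show q + 1 + (k+1) = (q + 1 + k) + 1 by omega]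
        exact this
    have := hlow (m - q - 1) (by omega)
    rw [show q + 1 + (m - q - 1) = m by omega] at this
    linarith [hEm ▸ this]
  have hget : ∀ q ≤ m, t ≤ orb t E q := by
    intro q hq
    rcases lt_or_eq_of_le hq with h | h
    · exact (hchain q h).le
    · rw [h, hEm]
  have hdec : ∀ q < m, orb t E (q + 1) < orb t E q := by
    intro q hq
    exact FF_lt_self ht ht4 hE1 hE2.le (hchain q hq).le (hO2t q).le
  have hprod : ∀ q < m, cos (orb t E (q + 1)) * cos (2 * t - orb t E q) = E := by
    intro q hq
    have hpr : prj t (orb t E q) = orb t E q := prj_eq (hget q hq.le) (hO2t q).le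
    have hden : (0:ℝ) < cos (2 * t - orb t E q) := by
      have := den_pos ht ht4 (orb t E q); rwa [hpr] at this
    have hc := FF_cos ht ht4 hE1.le hE2.le (orb t E q)
    rw [hpr] at hc
    show cos (FF t E (orb t E q)) * cos (2 * t - orb t E q) = E
    rw [hc, div_mul_cancel₀ _ (ne_of_gt hden)]
  have hX0 : cos (orb t E 0) = E := by
    show cos (arccos E) = E
    exact Real.cos_arccos (by linarith) hEle1
  -- cos positivity helpers
  have hcosO : ∀ q, 0 < cos (orb t E q) := by
    intro q
    apply Real.cos_pos_of_mem_Ioo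
    constructor
    · linarith [hOnn q]
    · linarith [hO2t q]
  have hcosB : ∀ q ≤ m, 0 < cos (2 * t - orb t E q) := by
    intro q hq
    apply Real.cos_pos_of_mem_Ioo
    constructor
    · linarith [hO2t q]
    · linarith [hget q hq]
  set X : ℕ → ℝ := fun q =>
    if q ≤ m then cos (orb t E q) else if q ≤ n then cos (2 * t - orb t E (n - q)) else 1
    with hXdef
  have hXa : ∀ q, q ≤ m → X q = cos (orb t E q) := by
    intro q hq; simp only [hXdef]; rw [if_pos hq]
  have hXb : ∀ q, m < q → q ≤ n → X q = cos (2 * t - orb t E (n - q)) := by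
    intro q h1 h2; simp only [hXdef]; rw [if_neg (by omega), if_pos h2]
  have hXc : X (n + 1) = 1 := by
    simp only [hXdef]; rw [if_neg (by omega), if_neg (by omega)]
  refine ⟨E, X, ?_, ?_, ?_, ?_⟩
  · -- SolEven
    unfold SolEven
    rw [← htdef]
    refine ⟨?_, ?_, ⟨hE1, hE2⟩, ?_, hXc, ?_, ?_⟩
    · -- Chebyshev T equalities
      intro q hq
      have hqm : q < m := by omega
      rw [hXa q (by omega), hXb (n - q) (by omega) (by omega),
        show n - (n - q) = q by omega]
      show (Polynomial.Chebyshev.T ℝ κ).eval _ = (Polynomial.Chebyshev.T ℝ κ).eval _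
      rw [Polynomial.Chebyshev.T_real_cos, Polynomial.Chebyshev.T_real_cos]
      have hang : ((κ:ℤ):ℝ) * (2 * t - orb t E q) = 2 * π - ((κ:ℤ):ℝ) * orb t E q := by
        push_cast
        rw [← hkt]; ring
      rw [hang, Real.cos_sub]
      simp [Real.cos_two_pi, Real.sin_two_pi]
    · -- products
      intro q hq
      match q, hq with
      | 0, _ =>
        rw [hXa 0 (by omega), hX0, Nat.sub_zero, hXc, mul_one]
      | (p+1), hq =>
        have hp : p < m := by omega
        rw [hXa (p+1) (by omega), show n + 1 - (p+1) = n - p by omega,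
          hXb (n - p) (by omega) (by omega), show n - (n - p) = p by omega]
        exact hprod p hp
    · rw [hXa 0 (by omega), hX0]
    · rw [hXa m le_rfl, hEm]
    · -- strict chain
      intro q hq
      rcases lt_trichotomy q m with h | h | h
      · rw [hXa q h.le, hXa (q+1) (by omega)]
        exact Real.cos_lt_cos_of_nonneg_of_le_pi (hOnn (q+1)) (by linarith [hO2t q]) (hdec q h)
      · rw [h, hXa m le_rfl, hEm, hXb (m+1) (by omega) (by omega),
          show n - (m+1) = m - 1 by omega]
        exact Real.cos_lt_cos_of_nonneg_of_le_pi (by linarith [hO2t (m-1)]) (by linarith)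
          (by linarith [hchain (m-1) (by omega)])
      · rcases lt_or_eq_of_le (by omega : q + 1 ≤ n + 1) with hq2 | hq2
        · have hq2' : q < n := by omega
          rw [hXb q (by omega) hq2'.le, hXb (q+1) (by omega) (by omega),
            show n - q = (n - (q+1)) + 1 by omega]
          exact Real.cos_lt_cos_of_nonneg_of_le_pi (by linarith [hO2t (n - (q+1))])
            (by linarith [hOnn (n - (q+1) + 1)])
            (by linarith [hdec (n - (q+1)) (by omega)])
        · have hqn : q = n := by omega
          subst hqn
          rw [hXb q (by omega) le_rfl, Nat.sub_self, hXc]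
          have : (1:ℝ) = cos 0 := Real.cos_zero.symm
          rw [this]
          exact Real.cos_lt_cos_of_nonneg_of_le_pi le_rfl (by linarith [hOnn 0])
            (by linarith [hO2t 0])

  · -- uniqueness
    intro E' X' hS'
    obtain ⟨hT', hP', hEb', hX0', hXn1', hXm', hstep'⟩ := hS'
    rw [← htdef] at hEb' hXm'
    rw [← hmdef] at hT' hP' hXm'
    obtain ⟨h1', h2'⟩ := hEb'
    have hE'0 : 0 < E' := lt_trans (by positivity) h1'
    have mono' : ∀ q ≤ n + 1, ∀ p < q, X' p < X' q := by
      intro q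
      induction q with
      | zero => intro _ p hp; omega
      | succ q ih =>
        intro hq p hp
        rcases (by omega : p = q ∨ p < q) with h | h
        · rw [h]; exact hstep' q (by omega)
        · exact lt_trans (ih (by omega) p h) (hstep' q (by omega))
    have hXlt1 : ∀ q ≤ n, X' q < 1 := by
      intro q hq
      have := mono' (n+1) le_rfl q (by omega)
      rwa [hXn1'] at this
    have hXgeE : ∀ q ≤ m, E' ≤ X' q := by
      intro q hq
      rcases Nat.eq_zero_or_pos q with h | h
      · rw [h, hX0']
      · have := mono' q (by omega) 0 h
        rw [hX0'] at this; exact this.le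
    have hXlec : ∀ q ≤ m, X' q ≤ cos t := by
      intro q hq
      rcases lt_or_eq_of_le hq with h | h
      · have := mono' m (by omega) q h
        rw [hXm'] at this; exact this.le
      · rw [h, hXm']
    have branch : ∀ q < m, t < arccos (X' q) ∧ arccos (X' q) < 2 * t ∧
        X' (n - q) = cos (2 * t - arccos (X' q)) := by
      intro q hq
      have hXq1 : X' q < cos t := by
        have := mono' m (by omega) q hq; rwa [hXm'] at this
      have hXqg : cos (2 * t) < X' q := by linarith [hXgeE q hq.le]
      have hXqle1 : X' q ≤ 1 := by linarith
      have hXqm1 : (-1:ℝ) ≤ X' q := by linarith [hXgeE q hq.le]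
      have hθt : t < arccos (X' q) :=
        lt_arccos_of_lt_cos ht.le (by linarith) hXqm1 hXq1
      have hθ2t : arccos (X' q) < 2 * t :=
        arccos_lt_of_cos_lt (by linarith) (by linarith) hXqg
      refine ⟨hθt, hθ2t, ?_⟩
      have hu1 : cos t < X' (n - q) := by
        have := mono' (n - q) (by omega) m (by omega); rwa [hXm'] at this
      have hu2 : X' (n - q) < 1 := hXlt1 (n - q) (by omega)
      have hφ0 : 0 < arccos (X' (n - q)) := Real.arccos_pos.2 hu2
      have hφt : arccos (X' (n - q)) < t :=
        arccos_lt_of_cos_lt ht (by linarith) hu1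
      have hTeq := hT' q (by omega)
      unfold chebT at hTeq
      have e1 : X' q = cos (arccos (X' q)) := (Real.cos_arccos hXqm1 hXqle1).symm
      have e2 : X' (n - q) = cos (arccos (X' (n - q))) :=
        (Real.cos_arccos (by linarith) hu2.le).symm
      rw [e1, e2, Polynomial.Chebyshev.T_real_cos, Polynomial.Chebyshev.T_real_cos] at hTeq
      have hkc : ((κ:ℤ):ℝ) = (κ:ℝ) := by push_cast; ring
      rw [hkc] at hTeq
      -- hTeq : cos (κ θ) = cos (κ φ)
      set θ := arccos (X' q)
      set φ := arccos (X' (n - q))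
      have hκθ1 : π < (κ:ℝ) * θ := by
        calc π = (κ:ℝ) * t := hkt.symm
        _ < (κ:ℝ) * θ := by apply mul_lt_mul_of_pos_left hθt hκ0
      have hκθ2 : (κ:ℝ) * θ < 2 * π := by
        calc (κ:ℝ) * θ < (κ:ℝ) * (2 * t) := by apply mul_lt_mul_of_pos_left hθ2t hκ0
        _ = 2 * π := by rw [← hkt]; ring
      have hκφ1 : 0 ≤ (κ:ℝ) * φ := by positivity
      have hκφ2 : (κ:ℝ) * φ ≤ π := by
        calc (κ:ℝ) * φ ≤ (κ:ℝ) * t := by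
              apply mul_le_mul_of_nonneg_left hφt.le hκ0.le
        _ = π := hkt
      have hcos2 : cos (2 * π - (κ:ℝ) * θ) = cos ((κ:ℝ) * φ) := by
        rw [Real.cos_sub]
        simp [Real.cos_two_pi, Real.sin_two_pi, hTeq]
      have heq : 2 * π - (κ:ℝ) * θ = (κ:ℝ) * φ :=
        Real.injOn_cos (Set.mem_Icc.2 ⟨by linarith, by linarith⟩)
          (Set.mem_Icc.2 ⟨hκφ1, hκφ2⟩) hcos2
      have hφval : φ = 2 * t - θ := by
        have h3 : (κ:ℝ) * φ = (κ:ℝ) * (2 * t - θ) := by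
          rw [← heq, mul_sub, ← hkt]; ring
        exact mul_left_cancel₀ (ne_of_gt hκ0) h3
      rw [e2, hφval]
    have hrec : ∀ q ≤ m, orb t E' q = arccos (X' q) := by
      intro q
      induction q with
      | zero => intro _; show arccos E' = arccos (X' 0); rw [hX0']
      | succ q ih =>
        intro hq
        have hqm : q < m := by omega
        have ihq := ih (by omega)
        obtain ⟨hθt, hθ2t, hbr⟩ := branch q hqm
        show FF t E' (orb t E' q) = arccos (X' (q+1))
        rw [ihq, FF, prj_eq hθt.le hθ2t.le]
        have hcpos' : 0 < cos (2 * t - arccos (X' q)) := by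
          apply Real.cos_pos_of_mem_Ioo
          constructor <;> [linarith; linarith]
        have hPq := hP' (q+1) (by omega)
        rw [show n + 1 - (q+1) = n - q by omega, hbr] at hPq
        have : E' / cos (2 * t - arccos (X' q)) = X' (q+1) := by
          rw [div_eq_iff (ne_of_gt hcpos')]
          linarith [hPq]
        rw [this]
    have horbm : orb t E' m = t := by
      rw [hrec m le_rfl, hXm', Real.arccos_cos ht.le (by linarith)]
    have hEE : E' = E := by
      by_contra hne'
      rcases lt_or_gt_of_ne hne' with h | h
      · have := orb_anti ht ht4 h1'.le hE2.le h m
        rw [horbm, hEm] at this; exact lt_irrefl _ this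
      · have := orb_anti ht ht4 hE1.le h2'.le h m
        rw [horbm, hEm] at this; exact lt_irrefl _ this
    subst hEE
    refine ⟨rfl, ?_⟩
    intro q hq
    rcases (by omega : q ≤ m ∨ (m < q ∧ q ≤ n) ∨ q = n + 1) with h | ⟨h1, h2⟩ | h
    · rw [hXa q h, hrec q h]
      exact (Real.cos_arccos (by linarith [hXgeE q h]) (by linarith [hXlec q h])).symm
    · obtain ⟨_, _, hbr⟩ := branch (n - q) (by omega)
      rw [show n - (n - q) = q by omega] at hbr
      rw [hXb q h1 h2, hrec (n - q) (by omega)]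
      exact hbr
    · rw [h, hXn1', hXc]
  · -- sign conditions
    intro q hq
    have hqm : q < m := by omega
    have hθ1 : t < orb t E q := hchain q hqm
    have hθ2 : orb t E q < 2 * t := hO2t q
    have hsθ : 0 < sin (orb t E q) :=
      Real.sin_pos_of_pos_of_lt_pi (by linarith) (by linarith)
    have hκθ1 : π < (κ:ℝ) * orb t E q := by
      calc π = (κ:ℝ) * t := hkt.symm
      _ < _ := by exact mul_lt_mul_of_pos_left hθ1 hκ0
    have hκθ2 : (κ:ℝ) * orb t E q < 2 * π := by
      calc (κ:ℝ) * orb t E q < (κ:ℝ) * (2 * t) := mul_lt_mul_of_pos_left hθ2 hκ0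
      _ = 2 * π := by rw [← hkt]; ring
    have hsinneg : sin ((κ:ℝ) * orb t E q) < 0 := by
      have h1 : 0 < sin (2 * π - (κ:ℝ) * orb t E q) :=
        Real.sin_pos_of_pos_of_lt_pi (by linarith) (by linarith)
      rw [Real.sin_sub] at h1
      simp [Real.sin_two_pi, Real.cos_two_pi] at h1
      linarith
    have hU1 := chebU_cos κ (by omega) (orb t E q)
    have hUneg : chebU (κ - 1) (cos (orb t E q)) < 0 := by nlinarith
    -- the other point
    have hφ1 : 0 < 2 * t - orb t E q := by linarith
    have hφ2 : 2 * t - orb t E q < t := by linarith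
    have hsφ : 0 < sin (2 * t - orb t E q) :=
      Real.sin_pos_of_pos_of_lt_pi (by linarith) (by linarith)
    have hκφ : (κ:ℝ) * (2 * t - orb t E q) = 2 * π - (κ:ℝ) * orb t E q := by
      rw [← hkt]; ring
    have hsinφpos : 0 < sin ((κ:ℝ) * (2 * t - orb t E q)) := by
      rw [hκφ]
      exact Real.sin_pos_of_pos_of_lt_pi (by linarith) (by linarith)
    have hU2 := chebU_cos κ (by omega) (2 * t - orb t E q)
    have hUpos : 0 < chebU (κ - 1) (cos (2 * t - orb t E q)) := by nlinarith
    have hXq : X q = cos (orb t E q) := hXa q (by omega)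
    have hXnq : X (n - q) = cos (2 * t - orb t E q) := by
      rw [hXb (n - q) (by omega) (by omega), show n - (n - q) = q by omega]
    have hcos1 : 0 < cos (orb t E q) := hcosO q
    have hcos2 : 0 < cos (2 * t - orb t E q) := hcosB q hqm.le
    have hlt1 : cos (orb t E q) < 1 := by
      have := Real.cos_lt_cos_of_nonneg_of_le_pi le_rfl (by linarith) (by linarith : (0:ℝ) < orb t E q)
      rwa [Real.cos_zero] at this
    refine ⟨⟨?_, ?_, ?_⟩, ?_, ?_, ?_⟩
    · rw [hXq]; linarith
    · rw [hXq]; exact hlt1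
    · rw [hXq]; exact ne_of_gt hcos1
    · rw [hXq]; exact ne_of_lt hUneg
    · rw [hXq, hXnq]; exact mul_pos hcos1 hcos2
    · rw [hXq, hXnq]; exact mul_neg_of_neg_of_pos hUneg hUpos
  · -- Theta2
    unfold Theta2
    set β : ℕ → ℝ := fun q => if q = 0 then 0 else 2 * t - orb t E (q - 1) with hβdef
    set A : ℕ → ℝ := fun q => cos (β q) * sin (orb t E q) with hAdef
    set B : ℕ → ℝ := fun q => cos (orb t E q) * sin (β q) with hBdef
    set V : ℕ → ℝ := fun k => Nat.rec (motive := fun _ => ℝ) (-(B m) / A (m - 1))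
      (fun k v => v * B (m - 1 - k) / A (m - 2 - k)) k with hVdef
    set ω : ℕ → ℝ := fun q => V (m - 1 - q) with hωdef
    have hβ0 : β 0 = 0 := by simp [hβdef]
    have hβs : ∀ q, 1 ≤ q → β q = 2 * t - orb t E (q - 1) := by
      intro q hq; simp only [hβdef]; rw [if_neg (by omega)]
    have hV0 : V 0 = -(B m) / A (m - 1) := by rw [hVdef]; rfl
    have hVs : ∀ k, V (k + 1) = V k * B (m - 1 - k) / A (m - 2 - k) := by
      intro k; rw [hVdef]
    have hsinorb : ∀ q ≤ m, 0 < sin (orb t E q) := fun q hq =>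
      Real.sin_pos_of_pos_of_lt_pi (lt_of_lt_of_le ht (hget q hq)) (by linarith [hO2t q])
    have hβmem : ∀ q, 1 ≤ q → q ≤ m → 0 < β q ∧ β q < t := by
      intro q h1 h2
      rw [hβs q h1]
      exact ⟨by linarith [hO2t (q-1)], by linarith [hchain (q-1) (by omega)]⟩
    have hcosβ : ∀ q ≤ m, 0 < cos (β q) := by
      intro q hq
      rcases Nat.eq_zero_or_pos q with h | h
      · rw [h, hβ0, Real.cos_zero]; norm_num
      · obtain ⟨hb1, hb2⟩ := hβmem q h hq
        exact Real.cos_pos_of_mem_Ioo ⟨by linarith, by linarith⟩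
    have hA : ∀ q ≤ m, 0 < A q := by
      intro q hq
      simp only [hAdef]
      exact mul_pos (hcosβ q hq) (hsinorb q hq)
    have hB : ∀ q, 1 ≤ q → q ≤ m → 0 < B q := by
      intro q h1 h2
      obtain ⟨hb1, hb2⟩ := hβmem q h1 h2
      simp only [hBdef]
      exact mul_pos (hcosO q) (Real.sin_pos_of_pos_of_lt_pi hb1 (by linarith))
    have hB0 : B 0 = 0 := by simp [hBdef, hβ0]
    have hVneg : ∀ k ≤ m - 1, V k < 0 := by
      intro k
      induction k with
      | zero =>
        intro _
        rw [hV0]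
        exact div_neg_of_neg_of_pos (neg_lt_zero.2 (hB m hm1 le_rfl)) (hA (m-1) (by omega))
      | succ k ih =>
        intro hk
        rw [hVs]
        exact div_neg_of_neg_of_pos
          (mul_neg_of_neg_of_pos (ih (by omega)) (hB (m-1-k) (by omega) (by omega)))
          (hA (m-2-k) (by omega))
    have hωneg : ∀ q < m, ω q ≤ 0 := by
      intro q hq
      simp only [hωdef]
      exact (hVneg (m-1-q) (by omega)).le
    have hωtop : ω (m - 1) * A (m - 1) = -(B m) := by
      simp only [hωdef]
      rw [show m - 1 - (m - 1) = 0 by omega, hV0,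
        div_mul_cancel₀ _ (ne_of_gt (hA (m-1) (by omega)))]
    have hωrel : ∀ q, q + 2 ≤ m → ω q * A q = ω (q + 1) * B (q + 1) := by
      intro q hq
      simp only [hωdef]
      rw [show m - 1 - q = (m - 2 - q) + 1 by omega, hVs,
        show m - 1 - (m - 2 - q) = q + 1 by omega, show m - 2 - (m - 2 - q) = q by omega,
        div_mul_cancel₀ _ (ne_of_gt (hA q (by omega))),
        show m - 2 - q = m - 1 - (q + 1) by omega]
    have hEX : ∀ q ≤ m, E / X q = cos (β q) := by
      intro q hq
      match q, hq with
      | 0, _ => rw [hβ0, hXa 0 (by omega), hX0, div_self (ne_of_gt hE0), Real.cos_zero]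
      | (p+1), hq =>
        rw [hβs (p+1) (by omega), hXa (p+1) hq, div_eq_iff (ne_of_gt (hcosO (p+1)))]
        have := hprod p (by omega)
        simp only [Nat.add_sub_cancel]
        linarith
    refine ⟨X, ω, ?_, hωneg, ?_⟩
    · intro q hq
      refine ⟨?_, ?_, ?_⟩
      · rw [hXa q hq]; exact ne_of_gt (hcosO q)
      · rw [hXa q hq]; exact Real.abs_cos_le_one _
      · rw [hEX q hq]; exact Real.abs_cos_le_one _
    · intro j hj
      have hjκ : 1 ≤ j * κ := Nat.mul_pos (by omega) (by omega)
      have hNt : ((j * κ : ℕ):ℝ) * t = (j:ℝ) * π := by push_cast; rw [← hkt]; ring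
      have hUc : ∀ θ : ℝ, (1 - cos θ ^ 2) * chebU (j * κ - 1) (cos θ)
          = sin θ * sin (((j * κ : ℕ):ℝ) * θ) := by
        intro θ
        have h := chebU_cos (j * κ) hjκ θ
        calc (1 - cos θ ^ 2) * chebU (j * κ - 1) (cos θ)
            = sin θ * (chebU (j * κ - 1) (cos θ) * sin θ) := by
              rw [show (1:ℝ) - cos θ ^ 2 = sin θ ^ 2 from by rw [Real.sin_sq]]; ring
        _ = _ := by rw [h]
      have hsinNβ : ∀ p < m, sin (((j*κ:ℕ):ℝ) * β (p+1)) = -sin (((j*κ:ℕ):ℝ) * orb t E p) := by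
        intro p hp
        rw [hβs (p+1) (by omega)]
        simp only [Nat.add_sub_cancel]
        have e : ((j*κ:ℕ):ℝ) * (2*t - orb t E p)
            = (j:ℝ) * (2*π) - ((j*κ:ℕ):ℝ) * orb t E p := by
          push_cast; rw [← hkt]; ring
        have hsj : sin ((j:ℝ) * (2 * π)) = 0 := by
          have e2 : ((j:ℝ) * (2 * π)) = ((2 * j : ℕ):ℝ) * π := by push_cast; ring
          rw [e2, Real.sin_nat_mul_pi]
        have hcj : cos ((j:ℝ) * (2 * π)) = 1 := Real.cos_nat_mul_two_pi j
        rw [e, Real.sin_sub, hsj, hcj]; ring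
      have hg : ∀ q ≤ m, g j κ E (X q)
          = A q * sin (((j*κ:ℕ):ℝ) * orb t E q) - B q * sin (((j*κ:ℕ):ℝ) * orb t E (q - 1)) := by
        intro q hq
        unfold g
        rw [hEX q hq, hXa q hq]
        match q, hq with
        | 0, _ =>
          have u1 := hUc (orb t E 0)
          simp only [hAdef, hBdef, hβ0, Real.cos_zero, Real.sin_zero]
          linear_combination u1
        | (p+1), hq =>
          have u1 := hUc (orb t E (p+1))
          have u2 := hUc (β (p+1))
          have hsβ := hsinNβ p (by omega)
          simp only [hAdef, hBdef, Nat.add_sub_cancel]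
          linear_combination cos (β (p+1)) * u1 + cos (orb t E (p+1)) * u2
            + cos (orb t E (p+1)) * sin (β (p+1)) * hsβ
      have hsm : sin (((j*κ:ℕ):ℝ) * orb t E m) = 0 := by
        rw [hEm, hNt, Real.sin_nat_mul_pi]
      have hgm : g j κ E (X m) = -(B m) * sin (((j*κ:ℕ):ℝ) * orb t E (m-1)) := by
        rw [hg m le_rfl, hsm]; ring
      rw [hgm]
      have hterm : ∀ q ∈ Finset.range m, ω q * g j κ E (X q)
          = ω q * A q * sin (((j*κ:ℕ):ℝ) * orb t E q)
            - ω q * B q * sin (((j*κ:ℕ):ℝ) * orb t E (q-1)) := by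
        intro q hq
        rw [hg q (le_of_lt (Finset.mem_range.1 hq))]; ring
      rw [Finset.sum_congr rfl hterm, Finset.sum_sub_distrib]
      have hs1 : ∑ q ∈ Finset.range m, ω q * A q * sin (((j*κ:ℕ):ℝ) * orb t E q)
          = (∑ q ∈ Finset.range (m-1), ω q * A q * sin (((j*κ:ℕ):ℝ) * orb t E q))
            + ω (m-1) * A (m-1) * sin (((j*κ:ℕ):ℝ) * orb t E (m-1)) := by
        conv_lhs => rw [show m = (m-1)+1 by omega]
        rw [Finset.sum_range_succ]
      have hs2 : ∑ q ∈ Finset.range m, ω q * B q * sin (((j*κ:ℕ):ℝ) * orb t E (q-1))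
          = (∑ q ∈ Finset.range (m-1), ω (q+1) * B (q+1) * sin (((j*κ:ℕ):ℝ) * orb t E q))
            + ω 0 * B 0 * sin (((j*κ:ℕ):ℝ) * orb t E (0-1)) := by
        conv_lhs => rw [show m = (m-1)+1 by omega]
        rw [Finset.sum_range_succ']
        simp only [Nat.add_sub_cancel]
      have hmid : ∑ q ∈ Finset.range (m-1), ω q * A q * sin (((j*κ:ℕ):ℝ) * orb t E q)
          = ∑ q ∈ Finset.range (m-1), ω (q+1) * B (q+1) * sin (((j*κ:ℕ):ℝ) * orb t E q) := by
        apply Finset.sum_congr rfl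
        intro q hq
        have hq' := Finset.mem_range.1 hq
        rw [show ω q * A q = ω (q+1) * B (q+1) from hωrel q (by omega)]
      rw [hs1, hs2, hmid, hB0]
      linear_combination (-sin (((j*κ:ℕ):ℝ) * orb t E (m-1))) * hωtop
end

section
/- Fix an even integer κ ≥ 4. For each n ∈ ℕ*, let E_n denote the unique real number for which the system T_κ(X_q) = T_κ(X_{n−q}) (for q = 0, …, ⌈n/2⌉ − 1 when n is odd, respectively q = 0, …, n/2 − 1 when n is even) together with X_{1+q}·X_{n−q} = E_n (for q = −1, 0, …, ⌈n/2⌉ − 1 when n is odd, respectively q = −1, 0, …, n/2 − 1 when n is even) admits a solution with cos²(π/κ) < E_n < cos(π/κ) and E_n = X₀ < X₁ < ⋯ < X_{(n−1)/2} < cos(π/κ) < X_{(n+1)/2} < ⋯ < X_n < X_{n+1} = 1 (n odd), respectively E_n = X₀ < X₁ < ⋯ < X_{n/2} = cos(π/κ) < X_{n/2+1} < ⋯ < X_n < X_{n+1} = 1 (n even). Then the sequence (E_n) is strictly decreasing: E_{n+1} < E_n for every n ∈ ℕ*. -/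
/-!
Write `θ = π/κ` and `c = cos θ`. For `x ∈ (c², c)` the angle `arccos x` lies in `(θ, 2θ)`, and
since `T_κ (cos t) = cos (κ t)`, the only `y ∈ (c, 1)` with `T_κ y = T_κ x` is
`y = cos (2θ - arccos x)`. Hence the lower half of a solution is an orbit of
`x ↦ E / cos (2θ - arccos x)` started at `E`, and this map is increasing in both `E` and `x`.
If `E_n ≤ E_{n+1}`, the orbit of `E_{n+1}` would dominate that of `E_n` step by step; comparing
the two at the middle index, where one system sits at `c` and the other strictly on the wrong
side of it, gives a contradiction.
-/

open Real Filter

/-- The odd system, together with `cos²(π/κ) < E < cos(π/κ)` and the chain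
`E = X₀ < X₁ < ⋯ < X_{(n-1)/2} < cos(π/κ) < X_{(n+1)/2} < ⋯ < X_n < X_{n+1} = 1`. -/
def SolOdd (κ n : ℕ) (E : ℝ) (X : ℕ → ℝ) : Prop :=
  (∀ q ≤ (n - 1) / 2, chebT κ (X q) = chebT κ (X (n - q))) ∧
  (∀ q ≤ (n + 1) / 2, X q * X (n + 1 - q) = E) ∧
  (Real.cos (π / κ) ^ 2 < E ∧ E < Real.cos (π / κ)) ∧
  X 0 = E ∧ X (n + 1) = 1 ∧
  (∀ q < n + 1, X q < X (q + 1)) ∧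
  X ((n - 1) / 2) < Real.cos (π / κ) ∧ Real.cos (π / κ) < X ((n + 1) / 2)

open Set

noncomputable def angleReflect (θ x : ℝ) : ℝ := cos (2 * θ - arccos x)

lemma arccos_mem_Ioo {θ x : ℝ} (hθ : 0 ≤ θ) (hθπ : 2 * θ ≤ π)
    (hx : x ∈ Ioo (cos θ ^ 2) (cos θ)) : arccos x ∈ Ioo θ (2 * θ) := by
  obtain ⟨hx₁, hx₂⟩ := hx
  have hc : 0 < cos θ ∧ cos θ < 1 := by constructor <;> nlinarith [sq_nonneg (cos θ)]
  constructor
  · calc θ = arccos (cos θ) := (arccos_cos hθ (by linarith [pi_pos])).symm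
      _ < arccos x := arccos_lt_arccos (by nlinarith) hx₂ (cos_le_one θ)
  · calc arccos x < arccos (cos (2 * θ)) :=
          arccos_lt_arccos (neg_one_le_cos _) (by rw [cos_two_mul]; nlinarith) (by linarith)
      _ = 2 * θ := arccos_cos (by linarith) hθπ

lemma angleReflect_mem_Ioo {θ x : ℝ} (hθ : 0 ≤ θ) (hθπ : 2 * θ ≤ π)
    (hx : x ∈ Ioo (cos θ ^ 2) (cos θ)) : angleReflect θ x ∈ Ioo (cos θ) 1 := by
  obtain ⟨ha₁, ha₂⟩ := arccos_mem_Ioo hθ hθπ hx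
  constructor
  · exact cos_lt_cos_of_nonneg_of_le_pi (by linarith) (by linarith) (by linarith)
  · rw [← cos_zero]
    exact cos_lt_cos_of_nonneg_of_le_pi le_rfl (by linarith) (by linarith)

lemma angleReflect_le_angleReflect {θ x x' : ℝ} (hθ : 0 ≤ θ) (hθπ : 2 * θ ≤ π)
    (hx : x ∈ Ioo (cos θ ^ 2) (cos θ)) (hx' : x' ∈ Ioo (cos θ ^ 2) (cos θ))
    (hxx' : x ≤ x') :
    angleReflect θ x' ≤ angleReflect θ x := by
  have ha := arccos_mem_Ioo hθ hθπ hx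
  have ha' := arccos_mem_Ioo hθ hθπ hx'
  exact cos_le_cos_of_nonneg_of_le_pi (by linarith [ha.2]) (by linarith [ha'.1])
    (by linarith [arccos_le_arccos hxx'])

lemma chebT_cos (n : ℕ) (t : ℝ) : chebT n (cos t) = cos (n * t) := by
  simp [chebT]

lemma two_mul_pi_div_le_pi {κ : ℕ} (hκ : 2 ≤ κ) : 2 * (π / κ) ≤ π := by
  rw [mul_div_assoc', div_le_iff₀ (by positivity)]
  have : (2 : ℝ) ≤ κ := by exact_mod_cast hκ
  nlinarith [pi_pos]

lemma eq_angleReflect_of_chebT_eq {κ : ℕ} (hκ : 2 ≤ κ) {x y : ℝ}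
    (hx : x ∈ Ioo (cos (π / κ) ^ 2) (cos (π / κ))) (hy : y ∈ Ioo (cos (π / κ)) 1)
    (h : chebT κ x = chebT κ y) : y = angleReflect (π / κ) x := by
  set θ := π / κ with hθ_def
  have hκ0 : (0 : ℝ) < κ := by positivity
  have hκθ : (κ : ℝ) * θ = π := by rw [hθ_def]; field_simp
  have hθ : 0 ≤ θ := by positivity
  have hθπ : 2 * θ ≤ π := two_mul_pi_div_le_pi hκ
  obtain ⟨ha₁, ha₂⟩ := arccos_mem_Ioo hθ hθπ hx
  have hb₀ : 0 < arccos y := arccos_pos.mpr hy.2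
  have hb₁ : arccos y < θ := by
    calc arccos y < arccos (cos θ) :=
          arccos_lt_arccos (by linarith [neg_one_le_cos θ]) hy.1 hy.2.le
      _ = θ := arccos_cos hθ (by linarith)
  have hx₁ : -1 ≤ x := by nlinarith [sq_nonneg (cos θ), hx.1]
  have hy₁ : -1 ≤ y := by linarith [neg_one_le_cos θ, hy.1]
  rw [← cos_arccos hx₁ (hx.2.le.trans (cos_le_one θ)), ← cos_arccos hy₁ hy.2.le, chebT_cos,
    chebT_cos, ← cos_two_pi_sub] at h
  -- `κ · arccos x ∈ (π, 2π)` and `κ · arccos y ∈ (0, π)`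
  have hangle := injOn_cos
    ⟨by nlinarith, by nlinarith⟩ ⟨by positivity, by nlinarith⟩ h
  rw [angleReflect, ← cos_arccos hy₁ hy.2.le]
  congr 1
  apply mul_left_cancel₀ hκ0.ne'
  linear_combination -hangle - 2 * hκθ

/-- The lower half `X 0, …, X m` of a solution of energy `E`: by `eq_angleReflect_of_chebT_eq`
the partner `X (n - q)` of `X q` is `angleReflect θ (X q)`. -/
def IsLowerOrbit (θ E : ℝ) (X : ℕ → ℝ) (m : ℕ) : Prop :=
  X 0 = E ∧ ∀ q < m, X q ∈ Ioo (cos θ ^ 2) (cos θ) ∧ X (q + 1) * angleReflect θ (X q) = E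

lemma IsLowerOrbit.mono {θ E : ℝ} {X : ℕ → ℝ} {m m' : ℕ} (h : IsLowerOrbit θ E X m)
    (hm : m' ≤ m) : IsLowerOrbit θ E X m' :=
  ⟨h.1, fun q hq ↦ h.2 q (by omega)⟩

lemma IsLowerOrbit.le_of_energy_le {θ E E' : ℝ} {X X' : ℕ → ℝ} {m : ℕ}
    (hθ : 0 ≤ θ) (hθπ : 2 * θ ≤ π) (h : IsLowerOrbit θ E X m) (h' : IsLowerOrbit θ E' X' m)
    (hE : E ≤ E') :
    ∀ q ≤ m, X q ≤ X' q := by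
  intro q hq
  induction q with
  | zero => rw [h.1, h'.1]; exact hE
  | succ q ih =>
    obtain ⟨hx, hXq⟩ := h.2 q hq
    obtain ⟨hx', hXq'⟩ := h'.2 q hq
    have hE₀ : 0 ≤ E := h.1 ▸ ((sq_nonneg _).trans_lt (h.2 0 (by omega)).1.1).le
    have hc : 0 < cos θ := by nlinarith [hx.1, hx.2, sq_nonneg (cos θ)]
    have hR : 0 < angleReflect θ (X q) := hc.trans (angleReflect_mem_Ioo hθ hθπ hx).1
    have hR' : 0 < angleReflect θ (X' q) := hc.trans (angleReflect_mem_Ioo hθ hθπ hx').1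
    rw [eq_div_of_mul_eq hR.ne' hXq, eq_div_of_mul_eq hR'.ne' hXq']
    exact div_le_div₀ (hE₀.trans hE) hE hR'
      (angleReflect_le_angleReflect hθ hθπ hx hx' (ih (by omega)))

lemma isLowerOrbit_of_chain {κ n j : ℕ} (hκ : 2 ≤ κ) {E : ℝ} {X : ℕ → ℝ}
    (hT : ∀ q ≤ j, chebT κ (X q) = chebT κ (X (n - q)))
    (hP : ∀ q ≤ j + 1, X q * X (n + 1 - q) = E)
    (hE : cos (π / κ) ^ 2 < E) (hX0 : X 0 = E) (hXn : X (n + 1) = 1)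
    (hX : ∀ q < n + 1, X q < X (q + 1))
    (hjn : 2 * j < n) (hlow : X j < cos (π / κ)) (hhigh : cos (π / κ) < X (n - j)) :
    IsLowerOrbit (π / κ) E X (j + 1) := by
  have hmono : StrictMonoOn X (Iic (n + 1)) := strictMonoOn_Iic_of_lt_succ hX
  refine ⟨hX0, fun q hq ↦ ?_⟩
  have hx : X q ∈ Ioo (cos (π / κ) ^ 2) (cos (π / κ)) :=
    ⟨hE.trans_le (hX0 ▸ hmono.monotoneOn (by simp) (by simp; omega) (Nat.zero_le q)),
      (hmono.monotoneOn (by simp; omega) (by simp; omega) (by omega)).trans_lt hlow⟩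
  have hy : X (n - q) ∈ Ioo (cos (π / κ)) 1 :=
    ⟨hhigh.trans_le (hmono.monotoneOn (by simp; omega) (by simp; omega) (by omega)),
      hXn ▸ hmono (by simp; omega) (by simp) (by omega)⟩
  refine ⟨hx, ?_⟩
  rw [← eq_angleReflect_of_chebT_eq hκ hx hy (hT q (by omega))]
  simpa [show n + 1 - (q + 1) = n - q by omega] using hP (q + 1) (by omega)

lemma SolOdd.isLowerOrbit {κ k : ℕ} (hκ : 2 ≤ κ) {E : ℝ} {X : ℕ → ℝ}
    (h : SolOdd κ (2 * k + 1) E X) :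
    IsLowerOrbit (π / κ) E X (k + 1) ∧ cos (π / κ) < X (k + 1) := by
  obtain ⟨hT, hP, ⟨hE, -⟩, hX0, hXn, hX, hlow, hhigh⟩ := h
  simp only [show (2 * k + 1 - 1) / 2 = k by omega, show (2 * k + 1 + 1) / 2 = k + 1 by omega]
    at hT hP hlow hhigh
  refine ⟨isLowerOrbit_of_chain hκ hT hP hE hX0 hXn hX (by omega) hlow ?_, hhigh⟩
  rwa [show 2 * k + 1 - k = k + 1 by omega]

lemma SolEven.isLowerOrbit {κ k : ℕ} (hκ : 2 ≤ κ) (hk : 0 < k) {E : ℝ} {X : ℕ → ℝ}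
    (h : SolEven κ (2 * k) E X) :
    IsLowerOrbit (π / κ) E X k ∧ X k = cos (π / κ) := by
  obtain ⟨j, rfl⟩ : ∃ j, k = j + 1 := ⟨k - 1, by omega⟩
  obtain ⟨hT, hP, ⟨hE, -⟩, hX0, hXn, hmid, hX⟩ := h
  simp only [show 2 * (j + 1) / 2 = j + 1 by omega, show j + 1 - 1 = j by omega] at hT hP hmid
  refine ⟨isLowerOrbit_of_chain hκ hT hP hE hX0 hXn hX (by omega) (hmid ▸ hX j (by omega)) ?_,
    hmid⟩
  rw [show 2 * (j + 1) - j = j + 1 + 1 by omega, ← hmid]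
  exact hX (j + 1) (by omega)

theorem energies_strict_decreasing_general (κ : ℕ) (hκ : 4 ≤ κ)
    (E : ℕ → ℝ) (X : ℕ → ℕ → ℝ)
    (hsol : ∀ n : ℕ, 1 ≤ n →
      (Odd n → SolOdd κ n (E n) (X n)) ∧ (Even n → SolEven κ n (E n) (X n))) :
    ∀ n : ℕ, 1 ≤ n → E (n + 1) < E n := by
  have hκ2 : 2 ≤ κ := by omega
  have hθ : 0 ≤ π / κ := by positivity
  have hθπ : 2 * (π / κ) ≤ π := two_mul_pi_div_le_pi hκ2
  intro n hn
  by_contra! hE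
  obtain ⟨k, rfl | rfl⟩ := Nat.even_or_odd' n
  · obtain ⟨hO, hmid⟩ := SolEven.isLowerOrbit hκ2 (by omega) ((hsol _ hn).2 (even_two_mul k))
    obtain ⟨hO', -⟩ := SolOdd.isLowerOrbit hκ2 ((hsol _ (by omega)).1 (odd_two_mul_add_one k))
    have hle := hO.le_of_energy_le hθ hθπ (hO'.mono k.le_succ) hE k le_rfl
    linarith [(hO'.2 k k.lt_succ_self).1.2]
  · obtain ⟨hO, hhigh⟩ := SolOdd.isLowerOrbit hκ2 ((hsol _ hn).1 (odd_two_mul_add_one k))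
    rw [show 2 * k + 1 + 1 = 2 * (k + 1) by ring] at hE
    obtain ⟨hO', hmid⟩ :=
      SolEven.isLowerOrbit hκ2 k.succ_pos ((hsol _ (by omega)).2 (even_two_mul (k + 1)))
    linarith [hO.le_of_energy_le hθ hθπ hO' hE (k + 1) le_rfl]

/-- The energies `E_n` of the odd/even systems form a strictly decreasing sequence. -/
theorem energies_strict_decreasing (κ : ℕ) (hκ : 4 ≤ κ) (hke : Even κ)
    (E : ℕ → ℝ) (X : ℕ → ℕ → ℝ)
    (hsol : ∀ n : ℕ, 1 ≤ n →
      (Odd n → SolOdd κ n (E n) (X n)) ∧ (Even n → SolEven κ n (E n) (X n))) :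
    ∀ n : ℕ, 1 ≤ n → E (n + 1) < E n :=
  energies_strict_decreasing_general κ hκ E X hsol
end

section
/- Fix an even integer κ ≥ 4. For each n ∈ ℕ*, let E_n denote the unique real number for which the system T_κ(X_q) = T_κ(X_{n−q}) (for q = 0, …, ⌈n/2⌉ − 1 when n is odd, respectively q = 0, …, n/2 − 1 when n is even) together with X_{1+q}·X_{n−q} = E_n (for q = −1, 0, …, ⌈n/2⌉ − 1 when n is odd, respectively q = −1, 0, …, n/2 − 1 when n is even) admits a solution with cos²(π/κ) < E_n < cos(π/κ) and E_n = X₀ < X₁ < ⋯ < X_{(n−1)/2} < cos(π/κ) < X_{(n+1)/2} < ⋯ < X_n < X_{n+1} = 1 (n odd), respectively E_n = X₀ < X₁ < ⋯ < X_{n/2} = cos(π/κ) < X_{n/2+1} < ⋯ < X_n < X_{n+1} = 1 (n even). Then E_n converges to cos²(π/κ) as n → ∞. -/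
open Real Filter

/-- Key inequality: if `x ∈ (cos²(π/κ), cos(π/κ))`, `y ∈ (cos(π/κ), 1)` and
`T_κ(x) = T_κ(y)`, then `x·y ≤ cos²(π/κ)`. -/
lemma key_prod_le (κ : ℕ) (hκ : 4 ≤ κ) {x y : ℝ}
    (hx1 : Real.cos (π/κ)^2 < x) (hx2 : x < Real.cos (π/κ))
    (hy1 : Real.cos (π/κ) < y) (hy2 : y < 1)
    (h : chebT κ x = chebT κ y) : x * y ≤ Real.cos (π/κ)^2 := by
  have hκR : (4:ℝ) ≤ κ := by exact_mod_cast hκ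
  have hκ0 : (0:ℝ) < κ := by linarith
  have hπ := Real.pi_pos
  set a := π/(κ:ℝ) with ha
  have ha0 : 0 < a := div_pos hπ hκ0
  have ha4 : a ≤ π/4 := div_le_div_of_nonneg_left hπ.le (by norm_num) hκR
  have hmemπ : ∀ t : ℝ, 0 ≤ t → t ≤ π → t ∈ Set.Icc 0 π := fun t h1 h2 => ⟨h1, h2⟩
  have hc0 : 0 < Real.cos a := Real.cos_pos_of_mem_Ioo ⟨by linarith, by linarith⟩
  have h2c : Real.cos (2*a) < 1 := by
    have := Real.strictAntiOn_cos (hmemπ 0 le_rfl hπ.le) (hmemπ (2*a) (by linarith) (by linarith))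
      (by linarith)
    simpa using this
  have hc2_id : Real.cos a ^ 2 = (1 + Real.cos (2*a))/2 := by
    have := Real.cos_two_mul a; linarith
  have hx_lo : Real.cos (2*a) < x := by linarith [hc2_id, h2c, hx1]
  have hx_hi : x ≤ 1 := by linarith [Real.cos_le_one a]
  have hy_lo : (-1:ℝ) ≤ y := by linarith
  set θ := Real.arccos x with hθdef
  set φ := Real.arccos y with hφdef
  have hcosθ : Real.cos θ = x := Real.cos_arccos (by linarith [Real.neg_one_le_cos (2*a)]) hx_hi
  have hcosφ : Real.cos φ = y := Real.cos_arccos hy_lo hy2.le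
  have hθ0 : 0 ≤ θ := Real.arccos_nonneg x
  have hθπ : θ ≤ π := Real.arccos_le_pi x
  have hφ0 : 0 < φ := Real.arccos_pos.2 hy2
  have hφπ : φ ≤ π := Real.arccos_le_pi y
  have hθ1 : a < θ := by
    by_contra h'
    push_neg at h'
    have := Real.cos_le_cos_of_nonneg_of_le_pi hθ0 (by linarith) h'
    rw [hcosθ] at this; linarith
  have hθ2 : θ < 2*a := by
    by_contra h'
    push_neg at h'
    have := Real.cos_le_cos_of_nonneg_of_le_pi (by linarith : (0:ℝ) ≤ 2*a) hθπ h'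
    rw [hcosθ] at this; linarith
  have hφ2 : φ < a := by
    by_contra h'
    push_neg at h'
    have := Real.cos_le_cos_of_nonneg_of_le_pi ha0.le (by linarith) h'
    rw [hcosφ] at this; linarith
  have hka : (κ:ℝ) * a = π := by have hκne : (κ:ℝ) ≠ 0 := ne_of_gt hκ0; rw [ha]; field_simp
  have hT : Real.cos ((κ:ℝ)*θ) = Real.cos ((κ:ℝ)*φ) := by
    have h1 : chebT κ x = Real.cos ((κ:ℝ)*θ) := by
      rw [chebT, ← hcosθ]
      have := Polynomial.Chebyshev.T_real_cos θ (κ:ℤ)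
      push_cast at this ⊢
      exact this
    have h2 : chebT κ y = Real.cos ((κ:ℝ)*φ) := by
      rw [chebT, ← hcosφ]
      have := Polynomial.Chebyshev.T_real_cos φ (κ:ℤ)
      push_cast at this ⊢
      exact this
    rw [← h1, ← h2, h]
  have hκθ1 : π < (κ:ℝ)*θ := by
    have := mul_lt_mul_of_pos_left hθ1 hκ0
    linarith [hka]
  have h2ka : (κ:ℝ)*(2*a) = 2*π := by rw [show (κ:ℝ)*(2*a) = 2*((κ:ℝ)*a) by ring, hka]
  have hκθ2 : (κ:ℝ)*θ < 2*π := by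
    have := mul_lt_mul_of_pos_left hθ2 hκ0
    linarith
  have hκφ0 : 0 < (κ:ℝ)*φ := mul_pos hκ0 hφ0
  have hκφπ : (κ:ℝ)*φ < π := by
    have := mul_lt_mul_of_pos_left hφ2 hκ0
    linarith [hka]
  have hcos2 : Real.cos (2*π - (κ:ℝ)*θ) = Real.cos ((κ:ℝ)*θ) := Real.cos_two_pi_sub _
  have heq : (κ:ℝ)*φ = 2*π - (κ:ℝ)*θ :=
    Real.injOn_cos ⟨hκφ0.le, hκφπ.le⟩ ⟨by linarith, by linarith⟩ (by rw [hcos2, ← hT])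
  have hsum : θ + φ = 2*a := by
    have h1 : (κ:ℝ) * (θ + φ) = (κ:ℝ) * (2*a) := by
      rw [mul_add, heq, h2ka]; ring
    exact mul_left_cancel₀ (ne_of_gt hκ0) h1
  have hcs := Real.cos_sub θ φ
  have hca := Real.cos_add θ φ
  have h1 := Real.cos_le_one (θ - φ)
  have hsumcos : Real.cos (θ + φ) = Real.cos (2*a) := by rw [hsum]
  rw [← hcosθ, ← hcosφ]
  linarith [hsumcos, hca, hcs, h1, hc2_id]

lemma cos_pik_mem (κ : ℕ) (hκ : 4 ≤ κ) : 0 < Real.cos (π/κ) ∧ Real.cos (π/κ) < 1 := by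
  have hκR : (4:ℝ) ≤ κ := by exact_mod_cast hκ
  have hπ := Real.pi_pos
  have hκ0 : (0:ℝ) < κ := by linarith
  have ha0 : 0 < π/(κ:ℝ) := div_pos hπ hκ0
  have ha4 : π/(κ:ℝ) ≤ π/4 := div_le_div_of_nonneg_left hπ.le (by norm_num) hκR
  refine ⟨Real.cos_pos_of_mem_Ioo ⟨by linarith, by linarith⟩, ?_⟩
  have := Real.strictAntiOn_cos (Set.mem_Icc.2 ⟨le_rfl, hπ.le⟩)
    (Set.mem_Icc.2 ⟨ha0.le, by linarith⟩) ha0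
  simpa using this

/-- The chain of lower bounds: each step of the bottom part of the chain advances
by at least `E - cos²(π/κ)`. -/
lemma chain_lb (κ n m : ℕ) (E : ℝ) (X : ℕ → ℝ) (hκ : 4 ≤ κ)
    (hE : Real.cos (π/κ)^2 < E)
    (hcheb : ∀ q, q < m → chebT κ (X q) = chebT κ (X (n - q)))
    (hprod : ∀ q, q < m → X (q+1) * X (n - q) = E)
    (hX0 : X 0 = E)
    (hlow : ∀ q, q < m → Real.cos (π/κ)^2 < X q ∧ X q < Real.cos (π/κ))
    (hhigh : ∀ q, q < m → Real.cos (π/κ) < X (n-q) ∧ X (n-q) < 1) :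
    ∀ k, k ≤ m → E + k*(E - Real.cos (π/κ)^2) ≤ X k := by
  have hc0 := (cos_pik_mem κ hκ).1
  intro k
  induction k with
  | zero => intro _; simp [hX0]
  | succ k ih =>
    intro hk
    have hkm : k < m := Nat.lt_of_succ_le hk
    have ihk := ih (le_of_lt hkm)
    have hple := key_prod_le κ hκ (hlow k hkm).1 (hlow k hkm).2
      (hhigh k hkm).1 (hhigh k hkm).2 (hcheb k hkm)
    have hy0 : 0 < X (n - k) := lt_trans hc0 (hhigh k hkm).1
    have hy1 : X (n - k) < 1 := (hhigh k hkm).2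
    have hprodk := hprod k hkm
    have h1 : (X (k+1) - X k) * X (n-k) = E - X k * X (n-k) := by
      rw [sub_mul, hprodk]
    have h2 : E - Real.cos (π/κ)^2 ≤ (X (k+1) - X k) * X (n-k) := by
      rw [h1]; linarith
    have h3 : 0 < X (k+1) - X k := by
      rcases lt_trichotomy (X (k+1) - X k) 0 with h | h | h
      · nlinarith
      · nlinarith
      · exact h
    have h4 : (X (k+1) - X k) * X (n-k) ≤ X (k+1) - X k := by nlinarith
    have hstep : X k + (E - Real.cos (π/κ)^2) ≤ X (k+1) := by linarith
    push_cast
    linarith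

/-- The energies `E_n` of the odd/even systems converge to `cos²(π/κ)`. -/
theorem energies_tendsto (κ : ℕ) (hκ : 4 ≤ κ) (hke : Even κ)
    (E : ℕ → ℝ) (X : ℕ → ℕ → ℝ)
    (hsol : ∀ n : ℕ, 1 ≤ n →
      (Odd n → SolOdd κ n (E n) (X n)) ∧ (Even n → SolEven κ n (E n) (X n))) :
    Tendsto E atTop (nhds (Real.cos (π / κ) ^ 2)) := by
  have hc0 := (cos_pik_mem κ hκ).1
  have hc1 := (cos_pik_mem κ hκ).2
  have hcc : Real.cos (π/κ)^2 < Real.cos (π/κ) := by nlinarith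
  have hlowbd : ∀ n, 1 ≤ n → Real.cos (π/κ)^2 < E n := by
    intro n hn
    rcases Nat.even_or_odd n with he | ho
    · exact ((hsol n hn).2 he).2.2.1.1
    · exact ((hsol n hn).1 ho).2.2.1.1
  have hupper : ∀ n, 3 ≤ n →
      (((n-1)/2 : ℕ):ℝ) * (E n - Real.cos (π/κ)^2)
        ≤ Real.cos (π/κ) - Real.cos (π/κ)^2 := by
    intro n hn
    rcases Nat.even_or_odd n with he | ho
    · -- even case
      obtain ⟨t, ht⟩ := he
      obtain ⟨hcheb, hprod, ⟨hE1, hE2⟩, hX0, hXtop, hXmid, hmono⟩ := (hsol n (by omega)).2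
        ⟨t, ht⟩
      have hlt : ∀ i j, i < j → j ≤ n+1 → X n i < X n j := by
        intro i j hij hj
        induction j with
        | zero => omega
        | succ j ihj =>
          rcases Nat.lt_or_ge i j with h | h
          · exact lt_trans (ihj h (by omega)) (hmono j (by omega))
          · have hij' : i = j := by omega
            subst hij'; exact hmono i (by omega)
      have hch := chain_lb κ n (n/2) (E n) (X n) hκ (hlowbd n (by omega))
        (fun q hq => hcheb q (by omega))
        (fun q hq => by
          have := hprod (q+1) (by omega)
          rwa [show n+1-(q+1) = n - q by omega] at this)
        hX0
        (fun q hq => by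
          constructor
          · rcases Nat.eq_zero_or_pos q with h | h
            · subst h; rw [hX0]; exact hlowbd n (by omega)
            · calc Real.cos (π/κ)^2 < E n := hlowbd n (by omega)
                _ = X n 0 := hX0.symm
                _ < X n q := hlt 0 q h (by omega)
          · calc X n q < X n (n/2) := hlt q (n/2) hq (by omega)
              _ = Real.cos (π/κ) := hXmid)
        (fun q hq => by
          constructor
          · calc Real.cos (π/κ) = X n (n/2) := hXmid.symm
              _ < X n (n - q) := hlt (n/2) (n-q) (by omega) (by omega)
          · calc X n (n-q) < X n (n+1) := hlt (n-q) (n+1) (by omega) le_rfl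
              _ = 1 := hXtop)
      have hfin := hch (n/2) le_rfl
      rw [hXmid] at hfin
      have hA : ((n/2 : ℕ):ℝ) * (E n - Real.cos (π/κ)^2)
          ≤ Real.cos (π/κ) - Real.cos (π/κ)^2 := by
        have := hlowbd n (show 1 ≤ n by omega); linarith
      have hcast : (((n-1)/2 : ℕ):ℝ) ≤ ((n/2 : ℕ):ℝ) := Nat.cast_le.2 (by omega)
      have hd : 0 ≤ E n - Real.cos (π/κ)^2 :=
        le_of_lt (sub_pos.2 (hlowbd n (by omega)))
      have := mul_le_mul_of_nonneg_right hcast hd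
      linarith
    · -- odd case
      obtain ⟨t, ht⟩ := ho
      obtain ⟨hcheb, hprod, ⟨hE1, hE2⟩, hX0, hXtop, hmono, hmid1, hmid2⟩ :=
        (hsol n (by omega)).1 ⟨t, ht⟩
      have hlt : ∀ i j, i < j → j ≤ n+1 → X n i < X n j := by
        intro i j hij hj
        induction j with
        | zero => omega
        | succ j ihj =>
          rcases Nat.lt_or_ge i j with h | h
          · exact lt_trans (ihj h (by omega)) (hmono j (by omega))
          · have hij' : i = j := by omega
            subst hij'; exact hmono i (by omega)
      have hch := chain_lb κ n ((n-1)/2) (E n) (X n) hκ (hlowbd n (by omega))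
        (fun q hq => hcheb q (by omega))
        (fun q hq => by
          have := hprod (q+1) (by omega)
          rwa [show n+1-(q+1) = n - q by omega] at this)
        hX0
        (fun q hq => by
          constructor
          · rcases Nat.eq_zero_or_pos q with h | h
            · subst h; rw [hX0]; exact hlowbd n (by omega)
            · calc Real.cos (π/κ)^2 < E n := hlowbd n (by omega)
                _ = X n 0 := hX0.symm
                _ < X n q := hlt 0 q h (by omega)
          · calc X n q < X n ((n-1)/2) := hlt q ((n-1)/2) hq (by omega)
              _ < Real.cos (π/κ) := hmid1)
        (fun q hq => by
          constructor
          · calc Real.cos (π/κ) < X n ((n+1)/2) := hmid2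
              _ < X n (n - q) := hlt ((n+1)/2) (n-q) (by omega) (by omega)
          · calc X n (n-q) < X n (n+1) := hlt (n-q) (n+1) (by omega) le_rfl
              _ = 1 := hXtop)
      have hfin := hch ((n-1)/2) le_rfl
      have hXm : X n ((n-1)/2) < Real.cos (π/κ) := hmid1
      have := hlowbd n (show 1 ≤ n by omega)
      linarith
  -- squeeze
  have h1 : Tendsto (fun n : ℕ => (((n-1)/2 : ℕ):ℝ)) atTop atTop :=
    tendsto_natCast_atTop_atTop.comp
      (tendsto_atTop_atTop.2 fun b => ⟨2*b+1, fun a ha => by omega⟩)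
  have h2 : Tendsto
      (fun n : ℕ => Real.cos (π/κ)^2 +
        (Real.cos (π/κ) - Real.cos (π/κ)^2) * (((n-1)/2 : ℕ):ℝ)⁻¹)
      atTop (nhds (Real.cos (π/κ)^2)) := by
    have h3 := h1.inv_tendsto_atTop
    have h4 := h3.const_mul (Real.cos (π/κ) - Real.cos (π/κ)^2)
    have h5 : Tendsto (fun n : ℕ => Real.cos (π/κ)^2 +
        (Real.cos (π/κ) - Real.cos (π/κ)^2) * (((n-1)/2 : ℕ):ℝ)⁻¹) atTop
        (nhds (Real.cos (π/κ)^2 + (Real.cos (π/κ) - Real.cos (π/κ)^2) * 0)) :=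
      Tendsto.add tendsto_const_nhds h4
    simpa using h5
  apply tendsto_of_tendsto_of_tendsto_of_le_of_le' tendsto_const_nhds h2
  · filter_upwards [eventually_ge_atTop 1] with n hn
    exact (hlowbd n hn).le
  · filter_upwards [eventually_ge_atTop 3] with n hn
    have hup := hupper n hn
    have hk1 : (1:ℝ) ≤ (((n-1)/2 : ℕ):ℝ) := by
      exact_mod_cast Nat.one_le_cast.2 (show 1 ≤ (n-1)/2 by omega)
    have hkpos : (0:ℝ) < (((n-1)/2 : ℕ):ℝ) := by linarith
    have hdiv : E n - Real.cos (π/κ)^2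
        ≤ (Real.cos (π/κ) - Real.cos (π/κ)^2) * (((n-1)/2 : ℕ):ℝ)⁻¹ := by
      rw [← div_eq_mul_inv, le_div_iff₀ hkpos]
      linarith [hup]
    linarith
end
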